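/- arXiv:2605.17594 — 7 statements merged into one kernel-verified Lean document; each statement's English description precedes it below -/
import Mathlib

section
/- Let p be an odd prime, V = (Z/pZ)^n, ζ a primitive p-th root of unity, and B, B' : V → Z/pZ functions such that Δ := B − B' is bent. Then for all a, a' ∈ V, |(e_{a,B}, e_{a',B'})|^2 = p^n, where e_{a,B}(v) = ζ^(a·v + B(v)) and (·,·) is the standard hermitian inner product on C^V. -/
open Finset

theorem stmt_2 (p n : ℕ) [hp : Fact p.Prime] (hodd : Odd p)
    (ζ : ℂ) (hζ : IsPrimitiveRoot ζ p)
    (B B' : (Fin n → ZMod p) → ZMod p)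
    (hbent : ∀ u : Fin n → ZMod p, u ≠ 0 → ∀ c : ZMod p,
      (Finset.univ.filter
        (fun v => (B (v + u) - B' (v + u)) - (B v - B' v) = c)).card = p ^ (n - 1))
    (a a' : Fin n → ZMod p) :
    (‖(∑ v : Fin n → ZMod p,
        (ζ ^ (((∑ i, a i * v i) + B v).val)) *
          (starRingEnd ℂ) (ζ ^ (((∑ i, a' i * v i) + B' v).val)))‖) ^ 2
      = (p : ℝ) ^ n := by
  have hp1 : 1 < p := hp.out.one_lt
  have hp0 : p ≠ 0 := Nat.Prime.ne_zero hp.out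
  haveI : NeZero p := ⟨hp0⟩
  have hζp : ζ ^ p = 1 := hζ.pow_eq_one
  set Z : ZMod p → ℂ := fun x => ζ ^ x.val with hZ
  -- multiplicativity
  have hmul : ∀ x y : ZMod p, Z (x + y) = Z x * Z y := by
    intro x y
    have h1 : x.val + y.val = p * ((x.val + y.val) / p) + (x + y).val := by
      rw [ZMod.val_add]; exact (Nat.div_add_mod _ p).symm
    have : ζ ^ (x.val + y.val) = Z (x + y) := by
      rw [h1, pow_add, pow_mul, hζp, one_pow, one_mul]
    rw [← this, pow_add]
  have hZ0 : Z 0 = 1 := by simp [hZ, ZMod.val_zero]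
  have hnorm : ‖ζ‖ = 1 := Complex.norm_eq_one_of_pow_eq_one hζp hp0
  have hconj : ∀ x : ZMod p, (starRingEnd ℂ) (Z x) = Z (-x) := by
    intro x
    have h1 : Z x * Z (-x) = 1 := by rw [← hmul, add_neg_cancel, hZ0]
    have hZnorm : ‖Z x‖ = 1 := by simp [hZ, norm_pow, hnorm]
    rw [← Complex.inv_eq_conj hZnorm]
    exact inv_eq_of_mul_eq_one_left (by rw [mul_comm] at h1; exact h1)
  -- sum over all of ZMod p is zero
  have hsum0 : ∑ c : ZMod p, Z c = 0 := by
    have hb : ∑ c : ZMod p, Z c = ∑ i ∈ Finset.range p, ζ ^ i := by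
      refine Finset.sum_nbij' (fun c => c.val) (fun i => (i : ZMod p)) ?_ ?_ ?_ ?_ ?_
      · intro c _; simp [ZMod.val_lt]
      · intro i _; simp
      · intro c _; simp [ZMod.natCast_val, ZMod.cast_id]
      · intro i hi; simp only [Finset.mem_range] at hi
        exact ZMod.val_natCast_of_lt hi
      · intro c _; rfl
    rw [hb, hζ.geom_sum_eq_zero hp1]
  have hcard : Fintype.card (Fin n → ZMod p) = p ^ n := by
    simp [ZMod.card]
  set g : (Fin n → ZMod p) → ZMod p :=
    fun v => ((∑ i, a i * v i) + B v) - ((∑ i, a' i * v i) + B' v) with hg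
  have hS1 : (∑ v : Fin n → ZMod p,
      (ζ ^ (((∑ i, a i * v i) + B v).val)) *
        (starRingEnd ℂ) (ζ ^ (((∑ i, a' i * v i) + B' v).val)))
      = ∑ v : Fin n → ZMod p, Z (g v) := by
    apply Finset.sum_congr rfl
    intro v _
    have h2 : (ζ ^ (((∑ i, a' i * v i) + B' v).val)) = Z ((∑ i, a' i * v i) + B' v) := rfl
    rw [h2, hconj, ← hmul, hg]
    congr 1
    ring
  rw [hS1]
  have hSconj : (starRingEnd ℂ) (∑ v : Fin n → ZMod p, Z (g v))
      = ∑ v : Fin n → ZMod p, Z (-(g v)) := by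
    rw [map_sum]; exact Finset.sum_congr rfl fun v _ => hconj _
  have key : (∑ v : Fin n → ZMod p, Z (g v)) *
      (starRingEnd ℂ) (∑ v : Fin n → ZMod p, Z (g v)) = (p : ℂ) ^ n := by
    rw [hSconj, Finset.sum_mul_sum]
    have step1 : ∀ v : Fin n → ZMod p,
        ∑ w : Fin n → ZMod p, Z (g v) * Z (-(g w))
          = ∑ w : Fin n → ZMod p, Z (g v - g w) := by
      intro v; apply Finset.sum_congr rfl; intro w _
      rw [← hmul]; congr 1; ring
    simp_rw [step1]
    rw [Finset.sum_comm]
    have step2 : ∀ w : Fin n → ZMod p, ∑ v : Fin n → ZMod p, Z (g v - g w)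
        = ∑ u : Fin n → ZMod p, Z (g (w + u) - g w) := by
      intro w
      exact (Fintype.sum_equiv (Equiv.addLeft w) _ _ (fun u => rfl)).symm
    simp_rw [step2]
    rw [Finset.sum_comm]
    rw [Finset.sum_eq_single_of_mem (0 : Fin n → ZMod p) (Finset.mem_univ _) ?_]
    · simp only [add_zero, sub_self, hZ0, Finset.sum_const, Finset.card_univ, hcard,
        nsmul_eq_mul, mul_one]
      push_cast; ring
    · intro u _ hu0
      have hdec : ∀ w : Fin n → ZMod p, g (w + u) - g w =
          ((∑ i, a i * u i) - (∑ i, a' i * u i)) +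
            ((B (w + u) - B' (w + u)) - (B w - B' w)) := by
        intro w
        simp only [hg]
        have h1 : (∑ i, a i * (w + u) i) = (∑ i, a i * w i) + (∑ i, a i * u i) := by
          rw [← Finset.sum_add_distrib]
          exact Finset.sum_congr rfl fun i _ => by simp [Pi.add_apply, mul_add]
        have h2 : (∑ i, a' i * (w + u) i) = (∑ i, a' i * w i) + (∑ i, a' i * u i) := by
          rw [← Finset.sum_add_distrib]
          exact Finset.sum_congr rfl fun i _ => by simp [Pi.add_apply, mul_add]
        rw [h1, h2]; ring
      calc ∑ w : Fin n → ZMod p, Z (g (w + u) - g w)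
          = Z ((∑ i, a i * u i) - (∑ i, a' i * u i)) *
              ∑ w : Fin n → ZMod p, Z ((B (w + u) - B' (w + u)) - (B w - B' w)) := by
            rw [Finset.mul_sum]
            exact Finset.sum_congr rfl fun w _ => by rw [hdec, hmul]
        _ = 0 := by
            rw [← Finset.sum_fiberwise Finset.univ
              (fun w => (B (w + u) - B' (w + u)) - (B w - B' w))
              (fun w => Z ((B (w + u) - B' (w + u)) - (B w - B' w)))]
            have hfib : ∀ c : ZMod p,
                (∑ w ∈ Finset.univ.filter
                  (fun w => (B (w + u) - B' (w + u)) - (B w - B' w) = c),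
                  Z ((B (w + u) - B' (w + u)) - (B w - B' w))) = (p ^ (n - 1) : ℕ) * Z c := by
              intro c
              rw [Finset.sum_congr rfl (fun w hw => by
                rw [(Finset.mem_filter.mp hw).2]), Finset.sum_const, hbent u hu0 c,
                nsmul_eq_mul]
            simp_rw [hfib]
            rw [← Finset.mul_sum, hsum0, mul_zero, mul_zero]
  have hnsq : (Complex.normSq (∑ v : Fin n → ZMod p, Z (g v)) : ℂ) = (((p : ℝ) ^ n : ℝ) : ℂ) := by
    rw [← Complex.mul_conj, key]; push_cast; ring
  rw [Complex.sq_norm]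
  exact_mod_cast hnsq
end

section
/- Let p be an odd prime, V = (Z/pZ)^n, and ℶ a mubent set: a set of p^n functions V → Z/pZ such that the difference of any two distinct members is bent. Then the standard basis {e_a : a ∈ V} together with the bases M_B = {p^{-n/2} e_{a,B} : a ∈ V} for B ∈ ℶ form a set of p^n + 1 pairwise mutually unbiased orthonormal bases of C^{p^n}. -/
open Finset

section aux
variable {p : ℕ} [hp : Fact p.Prime] {ζ : ℂ}

omit hp in
lemma chi_pow_mod (hζ : IsPrimitiveRoot ζ p) (m : ℕ) : ζ ^ (m % p) = ζ ^ m := by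
  conv_rhs => rw [← Nat.div_add_mod m p]
  rw [pow_add, pow_mul, hζ.pow_eq_one, one_pow, one_mul]

lemma chi_add (hζ : IsPrimitiveRoot ζ p) (x y : ZMod p) :
    ζ ^ (x + y).val = ζ ^ x.val * ζ ^ y.val := by
  rw [ZMod.val_add, chi_pow_mod hζ, pow_add]

lemma chi_abs (hζ : IsPrimitiveRoot ζ p) (x : ZMod p) : ‖ζ ^ x.val‖ = 1 := by
  have h1 : ‖ζ‖ = 1 :=
    Complex.norm_eq_one_of_pow_eq_one hζ.pow_eq_one hp.out.ne_zero
  rw [norm_pow, h1, one_pow]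

lemma chi_ne_zero (hζ : IsPrimitiveRoot ζ p) (x : ZMod p) : ζ ^ x.val ≠ 0 := by
  intro h
  have := chi_abs hζ x
  rw [h, norm_zero] at this
  norm_num at this

lemma chi_conj (hζ : IsPrimitiveRoot ζ p) (x : ZMod p) :
    (starRingEnd ℂ) (ζ ^ x.val) = ζ ^ (-x).val := by
  have h1 : ζ ^ x.val * ζ ^ (-x).val = 1 := by
    rw [← chi_add hζ, add_neg_cancel, ZMod.val_zero, pow_zero]
  have h2 : ζ ^ x.val * (starRingEnd ℂ) (ζ ^ x.val) = 1 := by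
    rw [Complex.mul_conj, ← Complex.sq_norm, chi_abs hζ]; norm_num
  exact mul_left_cancel₀ (chi_ne_zero hζ x) (h2.trans h1.symm)

lemma chi_ne_one (hζ : IsPrimitiveRoot ζ p) {x : ZMod p} (hx : x ≠ 0) : ζ ^ x.val ≠ 1 := by
  apply hζ.pow_ne_one_of_pos_of_lt
  · exact (fun h => hx ((ZMod.val_eq_zero x).1 h))
  · exact ZMod.val_lt x

lemma sum_chi (hζ : IsPrimitiveRoot ζ p) : ∑ x : ZMod p, ζ ^ x.val = 0 := by
  rw [← hζ.geom_sum_eq_zero hp.out.one_lt]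
  refine Finset.sum_nbij' (fun x => x.val) (fun i => (i : ZMod p)) ?_ ?_ ?_ ?_ ?_
  · intro x _; exact Finset.mem_range.2 (ZMod.val_lt x)
  · intro i _; exact Finset.mem_univ _
  · intro x _; simp [ZMod.natCast_val, ZMod.cast_id]
  · intro i hi; exact ZMod.val_cast_of_lt (Finset.mem_range.1 hi)
  · intro x _; rfl

lemma sum_chi_balanced (hζ : IsPrimitiveRoot ζ p) {n : ℕ} {V : Type*} [Fintype V] [DecidableEq V]
    (g : V → ZMod p)
    (hbal : ∀ c : ZMod p, (Finset.univ.filter (fun v => g v = c)).card = p ^ (n - 1)) :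
    ∑ v : V, ζ ^ (g v).val = 0 := by
  rw [← Finset.sum_fiberwise Finset.univ g (fun v => ζ ^ (g v).val)]
  have h : ∀ c : ZMod p, ∑ v ∈ Finset.univ.filter (fun v => g v = c), ζ ^ (g v).val
      = (p ^ (n - 1) : ℕ) * ζ ^ c.val := by
    intro c
    rw [Finset.sum_congr rfl (fun v hv => by
      rw [(Finset.mem_filter.1 hv).2]), Finset.sum_const, hbal c, nsmul_eq_mul]
  simp only [h]
  rw [← Finset.mul_sum, sum_chi hζ, mul_zero]

lemma sum_chi_linear (hζ : IsPrimitiveRoot ζ p) {n : ℕ} {b : Fin n → ZMod p} (hb : b ≠ 0) :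
    ∑ v : Fin n → ZMod p, ζ ^ (∑ i, b i * v i).val = 0 := by
  obtain ⟨i, hi⟩ : ∃ i, b i ≠ 0 := by
    by_contra h; push_neg at h; exact hb (funext h)
  set w : Fin n → ZMod p := Pi.single i 1 with hw
  have hbw : (∑ j, b j * w j) = b i := by
    rw [Finset.sum_eq_single i]
    · simp [hw]
    · intro j _ hj; simp [hw, Pi.single_eq_of_ne hj]
    · intro h; exact absurd (Finset.mem_univ i) h
  set S := ∑ v : Fin n → ZMod p, ζ ^ (∑ j, b j * v j).val with hS
  have hshift : (∑ v : Fin n → ZMod p, ζ ^ (∑ j, b j * (v + w) j).val) = S :=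
    Fintype.sum_equiv (Equiv.addRight w) _ _ (fun v => by rw [Equiv.coe_addRight])
  have key : S = ζ ^ (b i).val * S := by
    nth_rewrite 1 [← hshift]
    rw [Finset.mul_sum]
    apply Finset.sum_congr rfl
    intro v _
    have hsum : (∑ j, b j * (v + w) j) = (∑ j, b j * w j) + ∑ j, b j * v j := by
      rw [← Finset.sum_add_distrib]
      apply Finset.sum_congr rfl
      intro j _; simp [mul_add]; ring
    rw [hsum, chi_add hζ, hbw]
  have hz : (ζ ^ (b i).val - 1) * S = 0 := by linear_combination key.symm
  rcases mul_eq_zero.1 hz with h | h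
  · exact absurd (sub_eq_zero.1 h) (chi_ne_one hζ hi)
  · exact h

end aux

/-- The standard basis vector `e_a` of `ℂ^V`. -/
noncomputable def stdVec (p n : ℕ) (a : Fin n → ZMod p) : (Fin n → ZMod p) → ℂ :=
  fun v => if v = a then 1 else 0

theorem stmt_3 (p n : ℕ) [hp : Fact p.Prime] (hodd : Odd p)
    (ζ : ℂ) (hζ : IsPrimitiveRoot ζ p)
    (beth : Finset (((Fin n → ZMod p) → ZMod p)))
    (hcard : beth.card = p ^ n)
    (hmubent : ∀ B ∈ beth, ∀ B' ∈ beth, B ≠ B' →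
      ∀ u : Fin n → ZMod p, u ≠ 0 → ∀ c : ZMod p,
        (Finset.univ.filter
          (fun v => (B (v + u) - B' (v + u)) - (B v - B' v) = c)).card = p ^ (n - 1))
    (f : (((Fin n → ZMod p) → ZMod p)) → (Fin n → ZMod p) → (Fin n → ZMod p) → ℂ)
    (hf : ∀ B a v, f B a v =
      ((Real.sqrt (p ^ n) : ℂ))⁻¹ * ζ ^ (((∑ i, a i * v i) + B v).val)) :
    -- the standard basis is orthonormal
    (∀ a a' : Fin n → ZMod p,
      ∑ v, stdVec p n a v * (starRingEnd ℂ) (stdVec p n a' v)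
        = if a = a' then 1 else 0) ∧
    -- each `M_B` is an orthonormal basis
    (∀ B ∈ beth, ∃ b : OrthonormalBasis (Fin n → ZMod p) ℂ
        (EuclideanSpace ℂ (Fin n → ZMod p)), ∀ a, b a = f B a) ∧
    (∀ B ∈ beth, ∀ a a' : Fin n → ZMod p,
      ∑ v, f B a v * (starRingEnd ℂ) (f B a' v) = if a = a' then 1 else 0) ∧
    -- the standard basis and each `M_B` are mutually unbiased
    (∀ B ∈ beth, ∀ a a' : Fin n → ZMod p,
      ‖∑ v, stdVec p n a v * (starRingEnd ℂ) (f B a' v)‖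
        = 1 / Real.sqrt (p ^ n)) ∧
    -- distinct bases `M_B`, `M_{B'}` are mutually unbiased
    (∀ B ∈ beth, ∀ B' ∈ beth, B ≠ B' → ∀ a a' : Fin n → ZMod p,
      ‖∑ v, f B a v * (starRingEnd ℂ) (f B' a' v)‖
        = 1 / Real.sqrt (p ^ n)) ∧
    -- there are `p ^ n + 1` bases in all
    beth.card + 1 = p ^ n + 1 := by
  have hcV : Fintype.card (Fin n → ZMod p) = p ^ n := by
    simp [Fintype.card_fun, ZMod.card]
  set r : ℝ := Real.sqrt ((p : ℝ) ^ n) with hrdef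
  have hppos : (0 : ℝ) < (p : ℝ) ^ n := by
    have := hp.out.pos; positivity
  have hrpos : 0 < r := Real.sqrt_pos.2 hppos
  have hrr : r * r = (p : ℝ) ^ n := Real.mul_self_sqrt hppos.le
  have hrC : ((p ^ n : ℕ) : ℂ) = (r : ℂ) * r := by
    push_cast
    exact_mod_cast congrArg Complex.ofReal hrr.symm
  have hrCne : (r : ℂ) ≠ 0 := by
    simpa using hrpos.ne'
  -- the basic product formula
  have hprod : ∀ B B' (a a' v : Fin n → ZMod p),
      f B a v * (starRingEnd ℂ) (f B' a' v) = ((r : ℂ)⁻¹ * (r : ℂ)⁻¹) *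
        ζ ^ ((((∑ i, a i * v i) + B v) - ((∑ i, a' i * v i) + B' v)).val) := by
    intro B B' a a' v
    rw [hf, hf, map_mul, map_inv₀, Complex.conj_ofReal, chi_conj hζ, mul_mul_mul_comm,
      ← chi_add hζ, ← sub_eq_add_neg]
  -- orthonormality of each M_B
  have key : ∀ B (a a' : Fin n → ZMod p),
      ∑ v, f B a v * (starRingEnd ℂ) (f B a' v) = if a = a' then 1 else 0 := by
    intro B a a'
    have hdiff : ∀ v : Fin n → ZMod p,
        ((∑ i, a i * v i) + B v) - ((∑ i, a' i * v i) + B v)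
          = ∑ i, (a i - a' i) * v i := by
      intro v
      rw [add_sub_add_right_eq_sub, ← Finset.sum_sub_distrib]
      exact Finset.sum_congr rfl fun i _ => (sub_mul _ _ _).symm
    simp only [fun v => hprod B B a a' v, hdiff]
    rw [← Finset.mul_sum]
    by_cases h : a = a'
    · subst h
      rw [if_pos rfl]
      simp only [sub_self, zero_mul, Finset.sum_const_zero, ZMod.val_zero, pow_zero,
        Finset.sum_const, Finset.card_univ, hcV, nsmul_eq_mul, mul_one]
      rw [hrC]
      field_simp
    · rw [if_neg h]
      have hb : (fun i => a i - a' i) ≠ 0 :=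
        fun hh => h (funext fun i => sub_eq_zero.1 (congrFun hh i))
      rw [sum_chi_linear hζ hb, mul_zero]
  refine ⟨?_, ?_, fun B _ => key B, ?_, ?_, ?_⟩
  -- part 1
  · intro a a'
    simp only [stdVec, apply_ite (starRingEnd ℂ), map_one, map_zero, ite_mul, one_mul, zero_mul]
    rw [Finset.sum_ite_eq' Finset.univ a, if_pos (Finset.mem_univ a)]
  -- part 2
  · intro B hB
    set v0 : (Fin n → ZMod p) → EuclideanSpace ℂ (Fin n → ZMod p) := fun a => WithLp.toLp 2 (f B a) with hv0
    have hon : Orthonormal ℂ v0 := by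
      rw [orthonormal_iff_ite]
      intro a a'
      have hin : (inner ℂ (v0 a) (v0 a') : ℂ) = ∑ v, f B a' v * (starRingEnd ℂ) (f B a v) := by
        rw [PiLp.inner_apply]
        exact Finset.sum_congr rfl fun v _ => by
          simp only [RCLike.inner_apply, hv0, PiLp.toLp_apply]
      rw [hin, key B a' a]
      by_cases h : a = a' <;> simp [h, eq_comm]
    have hcard2 : Fintype.card (Fin n → ZMod p)
        = Module.finrank ℂ (EuclideanSpace ℂ (Fin n → ZMod p)) := finrank_euclideanSpace.symm
    refine ⟨(basisOfLinearIndependentOfCardEqFinrank hon.linearIndependent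
      hcard2).toOrthonormalBasis ?_, ?_⟩
    · rwa [coe_basisOfLinearIndependentOfCardEqFinrank]
    · intro a
      rw [Module.Basis.coe_toOrthonormalBasis, coe_basisOfLinearIndependentOfCardEqFinrank]
  -- part 4
  · intro B hB a a'
    simp only [stdVec, ite_mul, one_mul, zero_mul]
    rw [Finset.sum_ite_eq' Finset.univ a, if_pos (Finset.mem_univ a), Complex.norm_conj, hf,
      norm_mul, norm_inv, Complex.norm_real, Real.norm_eq_abs, chi_abs hζ, mul_one,
      abs_of_nonneg hrpos.le, one_div]
  -- part 5
  · intro B hB B' hB' hne a a'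
    have hdiff : ∀ v : Fin n → ZMod p,
        ((∑ i, a i * v i) + B v) - ((∑ i, a' i * v i) + B' v)
          = (∑ i, (a i - a' i) * v i) + (B v - B' v) := by
      intro v
      rw [add_sub_add_comm, ← Finset.sum_sub_distrib]
      congr 1
      exact Finset.sum_congr rfl fun i _ => (sub_mul _ _ _).symm
    set g : (Fin n → ZMod p) → ZMod p :=
      fun v => (∑ i, (a i - a' i) * v i) + (B v - B' v) with hg
    have hT : (∑ v, f B a v * (starRingEnd ℂ) (f B' a' v))
        = ((r : ℂ)⁻¹ * (r : ℂ)⁻¹) * ∑ v, ζ ^ (g v).val := by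
      rw [Finset.mul_sum]
      exact Finset.sum_congr rfl fun v _ => by rw [hprod B B' a a' v, hdiff v]
    set S := ∑ v : Fin n → ZMod p, ζ ^ (g v).val with hSdef
    have hSS : S * (starRingEnd ℂ) S = ((p : ℂ)) ^ n := by
      rw [hSdef, map_sum, Finset.sum_mul_sum]
      have h1 : ∀ v w : Fin n → ZMod p,
          ζ ^ (g v).val * (starRingEnd ℂ) (ζ ^ (g w).val) = ζ ^ (g v - g w).val := by
        intro v w; rw [chi_conj hζ, ← chi_add hζ, ← sub_eq_add_neg]
      simp only [h1]
      rw [Finset.sum_comm]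
      have h2 : ∀ w : Fin n → ZMod p,
          (∑ v : Fin n → ZMod p, ζ ^ (g v - g w).val)
            = ∑ u : Fin n → ZMod p, ζ ^ (g (w + u) - g w).val := fun w =>
        (Fintype.sum_equiv (Equiv.addLeft w) (fun u => ζ ^ (g (w + u) - g w).val)
          (fun v => ζ ^ (g v - g w).val) (fun u => by rw [Equiv.coe_addLeft])).symm
      simp only [h2]
      rw [Finset.sum_comm]
      have h3 : ∀ u : Fin n → ZMod p,
          (∑ w : Fin n → ZMod p, ζ ^ (g (w + u) - g w).val)
            = if u = 0 then ((p : ℂ)) ^ n else 0 := by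
        intro u
        by_cases hu : u = 0
        · subst hu
          rw [if_pos rfl]
          simp only [add_zero, sub_self, ZMod.val_zero, pow_zero, Finset.sum_const,
            Finset.card_univ, hcV, nsmul_eq_mul, mul_one]
          push_cast
          ring
        · rw [if_neg hu]
          have hgsplit : ∀ w, g (w + u) - g w
              = (∑ i, (a i - a' i) * u i)
                + ((B (w + u) - B' (w + u)) - (B w - B' w)) := by
            intro w
            simp only [hg]
            have hlin : (∑ i, (a i - a' i) * (w + u) i)
                = (∑ i, (a i - a' i) * w i) + ∑ i, (a i - a' i) * u i := by
              rw [← Finset.sum_add_distrib]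
              exact Finset.sum_congr rfl fun i _ => by
                simp only [Pi.add_apply]; ring
            rw [hlin]; ring
          have hbal := hmubent B hB B' hB' hne u hu
          calc ∑ w : Fin n → ZMod p, ζ ^ (g (w + u) - g w).val
              = ∑ w : Fin n → ZMod p, ζ ^ ((∑ i, (a i - a' i) * u i).val)
                  * ζ ^ (((B (w + u) - B' (w + u)) - (B w - B' w)).val) :=
                Finset.sum_congr rfl fun w _ => by rw [hgsplit w, chi_add hζ]
            _ = ζ ^ ((∑ i, (a i - a' i) * u i).val)
                  * ∑ w : Fin n → ZMod p,
                      ζ ^ (((B (w + u) - B' (w + u)) - (B w - B' w)).val) := by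
                rw [Finset.mul_sum]
            _ = 0 := by
                rw [sum_chi_balanced hζ (n := n) _ hbal, mul_zero]
      simp only [h3]
      rw [Finset.sum_ite_eq' Finset.univ (0 : Fin n → ZMod p)]
      simp
    have habsS : ‖S‖ = r := by
      have h1 : Complex.normSq S = (p : ℝ) ^ n := by
        have h2 := hSS
        rw [Complex.mul_conj] at h2
        exact_mod_cast h2
      rw [Complex.norm_def, h1]
    rw [hT, norm_mul, habsS, norm_mul, norm_inv, Complex.norm_real, Real.norm_eq_abs,
      abs_of_nonneg hrpos.le]
    field_simp
  -- part 6
  · rw [hcard]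
end

section
/- Let p be an odd prime and Σ a spread set of symmetric n×n matrices over Z/pZ (a set of p^n matrices any two distinct members of which have nonsingular difference). Then {Q_M : M ∈ Σ}, where Q_M(v) = (1/2) v M vᵀ, is a mubent set: the difference of any two distinct members is bent. -/
open Finset Matrix

private lemma fiber_card (p n : ℕ) [hp : Fact p.Prime]
    (w : Fin n → ZMod p) (hw : w ≠ 0) (c : ZMod p) :
    (Finset.univ.filter fun v : Fin n → ZMod p => w ⬝ᵥ v = c).card = p ^ (n - 1) := by
  obtain ⟨i, hi⟩ : ∃ i, w i ≠ 0 := by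
    by_contra h; push_neg at h; exact hw (funext h)
  have hexist : ∀ d : ZMod p, ∃ v : Fin n → ZMod p, w ⬝ᵥ v = d := by
    intro d
    refine ⟨Pi.single i ((w i)⁻¹ * d), ?_⟩
    have : w ⬝ᵥ Pi.single i ((w i)⁻¹ * d) = w i * ((w i)⁻¹ * d) := by
      simp [dotProduct, Pi.single_apply, Finset.mul_sum]
    rw [this, ← mul_assoc, mul_inv_cancel₀ hi, one_mul]
  have key : ∀ d : ZMod p,
      (Finset.univ.filter fun v : Fin n → ZMod p => w ⬝ᵥ v = d).card
        = (Finset.univ.filter fun v : Fin n → ZMod p => w ⬝ᵥ v = 0).card := by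
    intro d
    obtain ⟨v0, hv0⟩ := hexist d
    apply Finset.card_bij (fun v _ => v - v0)
    · intro v hv
      simp only [Finset.mem_filter, Finset.mem_univ, true_and] at hv ⊢
      rw [dotProduct_sub, hv, hv0, sub_self]
    · intro a ha b hb h
      exact sub_left_injective h
    · intro b hb
      simp only [Finset.mem_filter, Finset.mem_univ, true_and] at hb
      refine ⟨b + v0, ?_, by abel⟩
      simp only [Finset.mem_filter, Finset.mem_univ, true_and]
      rw [dotProduct_add, hb, hv0, zero_add]
  have hn : 1 ≤ n := by
    rcases Nat.eq_zero_or_pos n with h | h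
    · exfalso; subst h; exact hi (Subsingleton.elim w 0 ▸ rfl)
    · exact h
  have total : ∑ d : ZMod p,
      (Finset.univ.filter fun v : Fin n → ZMod p => w ⬝ᵥ v = d).card
        = (Finset.univ : Finset (Fin n → ZMod p)).card := by
    rw [Finset.card_eq_sum_card_fiberwise
      (f := fun v => w ⬝ᵥ v) (t := Finset.univ) (fun v _ => Finset.mem_univ _)]
  have hcardU : (Finset.univ : Finset (Fin n → ZMod p)).card = p ^ n := by
    simp [Finset.card_univ, ZMod.card]
  have hsum : p * (Finset.univ.filter fun v : Fin n → ZMod p => w ⬝ᵥ v = 0).card = p ^ n := by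
    calc p * (Finset.univ.filter fun v : Fin n → ZMod p => w ⬝ᵥ v = 0).card
        = ∑ d : ZMod p,
            (Finset.univ.filter fun v : Fin n → ZMod p => w ⬝ᵥ v = d).card := by
          simp [key, Finset.sum_const, Finset.card_univ, ZMod.card, mul_comm]
      _ = p ^ n := by rw [total, hcardU]
  have hp0 : 0 < p := hp.out.pos
  rw [key c]
  have : p * (Finset.univ.filter fun v : Fin n → ZMod p => w ⬝ᵥ v = 0).card
      = p * p ^ (n - 1) := by
    rw [hsum, ← pow_succ']
    congr 1
    omega
  exact Nat.eq_of_mul_eq_mul_left hp0 this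

theorem stmt_6 (p n : ℕ) [hp : Fact p.Prime] (hodd : Odd p)
    (S : Finset (Matrix (Fin n) (Fin n) (ZMod p)))
    (hScard : S.card = p ^ n)
    (hSsymm : ∀ M ∈ S, Mᵀ = M)
    (hSspread : ∀ M ∈ S, ∀ N ∈ S, M ≠ N → IsUnit (M - N).det)
    (Q : Matrix (Fin n) (Fin n) (ZMod p) → (Fin n → ZMod p) → ZMod p)
    (hQ : ∀ M v, Q M v = (2 : ZMod p)⁻¹ * (v ⬝ᵥ M.mulVec v)) :
    ∀ M ∈ S, ∀ N ∈ S, M ≠ N →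
      ∀ u : Fin n → ZMod p, u ≠ 0 → ∀ c : ZMod p,
        (Finset.univ.filter (fun v =>
          (Q M (v + u) - Q N (v + u)) - (Q M v - Q N v) = c)).card = p ^ (n - 1) := by
  intro M hM N hN hMN u hu c
  have hA : IsUnit (M - N).det := hSspread M hM N hN hMN
  set A := M - N with hAdef
  have hAsymm : Aᵀ = A := by
    rw [hAdef, transpose_sub, hSsymm M hM, hSsymm N hN]
  have h2 : (2 : ZMod p) ≠ 0 := by
    have h2' : ((2 : ℕ) : ZMod p) ≠ 0 := by
      rw [Ne, ZMod.natCast_eq_zero_iff]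
      intro hdvd
      have hp2 : p = 2 := (Nat.prime_dvd_prime_iff_eq hp.out Nat.prime_two).mp hdvd
      rw [hp2] at hodd
      exact (by decide : ¬ Odd 2) hodd
    simpa using h2'
  have h2inv : (2 : ZMod p)⁻¹ * 2 = 1 := inv_mul_cancel₀ h2
  set w := A.vecMul u with hw
  have hwne : w ≠ 0 := by
    intro h
    apply hu
    have hAu : Invertible A := A.invertibleOfIsUnitDet hA
    calc u = (u ᵥ* A) ᵥ* A⁻¹ := by
            rw [Matrix.vecMul_vecMul, Matrix.mul_nonsing_inv A hA, Matrix.vecMul_one]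
      _ = 0 := by rw [← hw, h, Matrix.zero_vecMul]
  have key : ∀ v : Fin n → ZMod p,
      (Q M (v + u) - Q N (v + u)) - (Q M v - Q N v)
        = w ⬝ᵥ v + (2 : ZMod p)⁻¹ * (u ⬝ᵥ A.mulVec u) := by
    intro v
    have hsymM : v ⬝ᵥ M.mulVec u = u ⬝ᵥ M.mulVec v := by
      rw [Matrix.dotProduct_mulVec, ← Matrix.mulVec_transpose, hSsymm M hM, dotProduct_comm]
    have hsymN : v ⬝ᵥ N.mulVec u = u ⬝ᵥ N.mulVec v := by
      rw [Matrix.dotProduct_mulVec, ← Matrix.mulVec_transpose, hSsymm N hN, dotProduct_comm]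
    have hwv : w ⬝ᵥ v = u ⬝ᵥ A.mulVec v := by
      rw [hw, ← Matrix.dotProduct_mulVec]
    rw [hQ, hQ, hQ, hQ, hwv, hAdef]
    simp only [sub_mulVec, dotProduct_sub, mulVec_add, dotProduct_add, add_dotProduct]
    linear_combination (2 : ZMod p)⁻¹ * hsymM - (2 : ZMod p)⁻¹ * hsymN
      + (u ⬝ᵥ M.mulVec v - u ⬝ᵥ N.mulVec v) * h2inv
  have hfilter : (Finset.univ.filter (fun v =>
        (Q M (v + u) - Q N (v + u)) - (Q M v - Q N v) = c))
      = Finset.univ.filter (fun v =>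
          w ⬝ᵥ v = c - (2 : ZMod p)⁻¹ * (u ⬝ᵥ A.mulVec u)) := by
    ext v
    simp only [Finset.mem_filter, Finset.mem_univ, true_and, key v, eq_sub_iff_add_eq]
  rw [hfilter]
  exact fiber_card p n w hwne _
end

section
/- Let V = (Z/2Z)^n and B, B' : V → Z/4Z with Δ = B − B' bent (in the Z/4Z sense). Define e_{a,B} ∈ C^V by e_{a,B}(v) = (−1)^(a·v) i^(B(v)). Then for all a, a' ∈ V, |(e_{a,B}, e_{a',B'})|^2 = 2^n, where (·,·) is the standard hermitian inner product on C^V. -/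
open Finset

private lemma Ipow_mod (m : ℕ) : Complex.I ^ (m % 4) = Complex.I ^ m := by
  conv_rhs => rw [← Nat.div_add_mod m 4, pow_add, pow_mul, Complex.I_pow_four, one_pow, one_mul]

private lemma negone_mod (m : ℕ) : (-1 : ℂ) ^ (m % 2) = (-1 : ℂ) ^ m := by
  conv_rhs => rw [← Nat.div_add_mod m 2, pow_add, pow_mul, neg_one_sq, one_pow, one_mul]

noncomputable def chi4 (x : ZMod 4) : ℂ := Complex.I ^ x.val
def eps2 (x : ZMod 2) : ℂ := (-1) ^ x.val

lemma chi4_add (x y : ZMod 4) : chi4 (x + y) = chi4 x * chi4 y := by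
  unfold chi4
  rw [ZMod.val_add, Ipow_mod, pow_add]

lemma eps2_add (x y : ZMod 2) : eps2 (x + y) = eps2 x * eps2 y := by
  unfold eps2
  rw [ZMod.val_add, negone_mod, pow_add]

lemma conj_chi4 (x : ZMod 4) : (starRingEnd ℂ) (chi4 x) = chi4 (-x) := by
  unfold chi4
  rw [map_pow, Complex.conj_I]
  have h3 : (-Complex.I) = Complex.I ^ 3 := by
    simp [pow_succ, Complex.I_mul_I]
  have hx : -x = 3 * x := by
    have h4 : (4 : ZMod 4) * x = 0 := by
      rw [show (4 : ZMod 4) = 0 from by decide, zero_mul]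
    linear_combination -h4
  rw [h3, ← pow_mul, hx, ZMod.val_mul, Ipow_mod,
    show ZMod.val (3 : ZMod 4) = 3 from rfl]

lemma chi4_zero : chi4 0 = 1 := rfl

lemma chi4_one : chi4 1 = Complex.I := by
  unfold chi4
  rw [show ((1 : ZMod 4)).val = 1 by decide, pow_one]

lemma chi4_two : chi4 2 = -1 := by
  unfold chi4
  rw [show ((2 : ZMod 4)).val = 2 by decide, Complex.I_sq]

lemma chi4_three : chi4 3 = -Complex.I := by
  unfold chi4
  rw [show ((3 : ZMod 4)).val = 3 by decide, pow_succ, Complex.I_sq]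
  ring

lemma eps2_zero : eps2 0 = 1 := rfl

lemma gmul (x y : ZMod 2) (p q : ZMod 4) :
    (eps2 x * chi4 p) * (eps2 y * chi4 (-q)) = eps2 (x + y) * chi4 (p - q) := by
  rw [eps2_add, sub_eq_add_neg, chi4_add]; ring

theorem stmt_8 (n : ℕ) (B B' : (Fin n → ZMod 2) → ZMod 4)
    (hbent : ∀ u : Fin n → ZMod 2, u ≠ 0 →
      (Finset.univ.filter (fun v =>
        (B (v + u) - B' (v + u)) - (B v - B' v) = 0)).card =
      (Finset.univ.filter (fun v =>
        (B (v + u) - B' (v + u)) - (B v - B' v) = 2)).card ∧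
      (Finset.univ.filter (fun v =>
        (B (v + u) - B' (v + u)) - (B v - B' v) = 1)).card =
      (Finset.univ.filter (fun v =>
        (B (v + u) - B' (v + u)) - (B v - B' v) = 3)).card)
    (a a' : Fin n → ZMod 2) :
    (‖(∑ v : Fin n → ZMod 2,
        ((-1 : ℂ) ^ ((∑ i, a i * v i).val) * Complex.I ^ ((B v).val)) *
          (starRingEnd ℂ)
            ((-1 : ℂ) ^ ((∑ i, a' i * v i).val) * Complex.I ^ ((B' v).val)))‖) ^ 2
      = (2 : ℝ) ^ n := by
  -- basic char-2 fact
  have hself : ∀ v : (Fin n → ZMod 2), v + v = 0 := by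
    intro v; funext i
    have : ∀ x : ZMod 2, x + x = 0 := by decide
    exact this (v i)
  have hself2 : ∀ x : ZMod 2, x + x = 0 := by decide
  set d : (Fin n → ZMod 2) → ZMod 2 := fun v => (∑ i, a i * v i) + (∑ i, a' i * v i) with hd
  set Δ : (Fin n → ZMod 2) → ZMod 4 := fun v => B v - B' v with hΔ
  set g : (Fin n → ZMod 2) → ℂ := fun v => eps2 (d v) * chi4 (Δ v) with hg
  -- the summand equals g
  have hsummand : ∀ v : (Fin n → ZMod 2),
      ((-1 : ℂ) ^ ((∑ i, a i * v i).val) * Complex.I ^ ((B v).val)) *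
          (starRingEnd ℂ)
            ((-1 : ℂ) ^ ((∑ i, a' i * v i).val) * Complex.I ^ ((B' v).val)) = g v := by
    intro v
    have hconjneg : (starRingEnd ℂ) ((-1 : ℂ) ^ ((∑ i, a' i * v i).val)) =
        (-1 : ℂ) ^ ((∑ i, a' i * v i).val) := by simp
    rw [map_mul, hconjneg]
    have : (starRingEnd ℂ) (Complex.I ^ ((B' v).val)) = chi4 (-(B' v)) := conj_chi4 (B' v)
    rw [this, hg, hd, hΔ]
    simp only [eps2_add, sub_eq_add_neg, chi4_add]
    show (-1:ℂ) ^ _ * chi4 (B v) * ((-1:ℂ) ^ _ * chi4 (-B' v)) = _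
    unfold eps2 chi4
    ring
  set S : ℂ := ∑ v : (Fin n → ZMod 2), g v with hS
  rw [Finset.sum_congr rfl (fun v _ => hsummand v)]
  -- compute S * conj S
  have hconjg : ∀ w : (Fin n → ZMod 2), (starRingEnd ℂ) (g w) = eps2 (d w) * chi4 (-(Δ w)) := by
    intro w
    rw [hg, map_mul, conj_chi4]
    congr 1
    unfold eps2
    simp
  have key : S * (starRingEnd ℂ) S = (2 : ℂ) ^ n := by
    have h1 : S * (starRingEnd ℂ) S
        = ∑ v : (Fin n → ZMod 2), ∑ w : (Fin n → ZMod 2), eps2 (d v + d w) * chi4 (Δ v - Δ w) := by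
      rw [hS, map_sum, Finset.sum_mul_sum]
      refine Finset.sum_congr rfl fun v _ => Finset.sum_congr rfl fun w _ => ?_
      rw [hconjg, hg]
      exact gmul (d v) (d w) (Δ v) (Δ w)
    -- reindex v = w + u
    have h2 : (∑ v : (Fin n → ZMod 2), ∑ w : (Fin n → ZMod 2), eps2 (d v + d w) * chi4 (Δ v - Δ w))
        = ∑ u : (Fin n → ZMod 2), ∑ w : (Fin n → ZMod 2), eps2 (d (w + u) + d w) * chi4 (Δ (w + u) - Δ w) := by
      rw [Finset.sum_comm]
      rw [show (∑ w : Fin n → ZMod 2, ∑ v : Fin n → ZMod 2,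
            eps2 (d v + d w) * chi4 (Δ v - Δ w))
          = ∑ w : Fin n → ZMod 2, ∑ u : Fin n → ZMod 2,
            eps2 (d (w + u) + d w) * chi4 (Δ (w + u) - Δ w) from
        Finset.sum_congr rfl fun w _ =>
          (Fintype.sum_equiv (Equiv.addLeft w)
            (fun u => eps2 (d (w + u) + d w) * chi4 (Δ (w + u) - Δ w))
            (fun v => eps2 (d v + d w) * chi4 (Δ v - Δ w))
            (fun u => rfl)).symm ▸ rfl]
      exact Finset.sum_comm
    -- d is additive in its argument
    have hdadd : ∀ w u : (Fin n → ZMod 2), d (w + u) = d w + d u := by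
      intro w u
      rw [hd]
      simp only [Pi.add_apply, mul_add, Finset.sum_add_distrib]
      abel
    have h3 : ∀ u w : (Fin n → ZMod 2), eps2 (d (w + u) + d w) = eps2 (d u) := by
      intro u w
      rw [hdadd]
      congr 1
      rw [add_comm (d w) (d u), add_assoc, hself2, add_zero]
    -- inner sum for u ≠ 0 vanishes
    have hzero : ∀ u : (Fin n → ZMod 2), u ≠ 0 →
        (∑ w : (Fin n → ZMod 2), chi4 (Δ (w + u) - Δ w)) = 0 := by
      intro u hu
      set δ : (Fin n → ZMod 2) → ZMod 4 := fun w => Δ (w + u) - Δ w with hδ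
      have hfib := Finset.sum_fiberwise (Finset.univ : Finset (Fin n → ZMod 2)) δ (fun w => chi4 (δ w))
      rw [show (∑ w : (Fin n → ZMod 2), chi4 (Δ (w + u) - Δ w)) = ∑ w : (Fin n → ZMod 2), chi4 (δ w) from rfl, ← hfib]
      have hcard : ∀ k : ZMod 4,
          (∑ w ∈ Finset.univ.filter (fun w => δ w = k), chi4 (δ w))
            = ((Finset.univ.filter (fun w => δ w = k)).card : ℂ) * chi4 k := by
        intro k
        rw [Finset.sum_congr rfl (fun w hw => by
          rw [(Finset.mem_filter.mp hw).2]), Finset.sum_const, nsmul_eq_mul]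
      rw [Finset.sum_congr rfl fun k _ => hcard k]
      obtain ⟨h02, h13⟩ := hbent u hu
      have e02 : ((Finset.univ.filter (fun w => δ w = 2)).card : ℂ)
          = ((Finset.univ.filter (fun w => δ w = 0)).card : ℂ) := by
        have hh : (Finset.univ.filter (fun w => δ w = 2)).card
            = (Finset.univ.filter (fun w => δ w = 0)).card := by
          simp only [hδ, hΔ]; exact h02.symm
        exact_mod_cast congrArg (Nat.cast : ℕ → ℂ) hh
      have e13 : ((Finset.univ.filter (fun w => δ w = 3)).card : ℂ)
          = ((Finset.univ.filter (fun w => δ w = 1)).card : ℂ) := by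
        have hh : (Finset.univ.filter (fun w => δ w = 3)).card
            = (Finset.univ.filter (fun w => δ w = 1)).card := by
          simp only [hδ, hΔ]; exact h13.symm
        exact_mod_cast congrArg (Nat.cast : ℕ → ℂ) hh
      rw [show (∑ k : ZMod 4, ((Finset.univ.filter (fun w => δ w = k)).card : ℂ) * chi4 k)
          = ∑ k : Fin 4, ((Finset.univ.filter (fun w => δ w = (show ZMod 4 from k))).card : ℂ) * chi4 k from rfl,
        Fin.sum_univ_four]
      show ((Finset.univ.filter (fun w => δ w = (0 : ZMod 4))).card : ℂ) * chi4 0 + ((Finset.univ.filter (fun w => δ w = (1 : ZMod 4))).card : ℂ) * chi4 1 + ((Finset.univ.filter (fun w => δ w = (2 : ZMod 4))).card : ℂ) * chi4 2 + ((Finset.univ.filter (fun w => δ w = (3 : ZMod 4))).card : ℂ) * chi4 3 = 0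
      rw [chi4_zero, chi4_one, chi4_two, chi4_three, e02, e13]
      ring
    rw [h1, h2]
    have h4 : ∀ u : (Fin n → ZMod 2), (∑ w : (Fin n → ZMod 2), eps2 (d (w + u) + d w) * chi4 (Δ (w + u) - Δ w))
        = eps2 (d u) * ∑ w : (Fin n → ZMod 2), chi4 (Δ (w + u) - Δ w) := by
      intro u
      rw [Finset.mul_sum]
      exact Finset.sum_congr rfl fun w _ => by rw [h3]
    rw [Finset.sum_congr rfl fun u _ => h4 u]
    rw [Finset.sum_eq_single_of_mem (0 : (Fin n → ZMod 2)) (Finset.mem_univ 0)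
      (fun u _ hu => by rw [hzero u hu, mul_zero])]
    have hd0 : d 0 = 0 := by
      rw [hd]; simp
    have hΔ0 : ∀ w : (Fin n → ZMod 2), Δ (w + 0) - Δ w = 0 := by
      intro w; rw [add_zero, sub_self]
    rw [hd0, Finset.sum_congr rfl fun w _ => by rw [hΔ0 w]]
    rw [eps2_zero, chi4_zero, one_mul,
      Finset.sum_const, nsmul_eq_mul, mul_one, Finset.card_univ]
    rw [show Fintype.card (Fin n → ZMod 2) = 2 ^ n by
      simp [Fintype.card_fun]]
    push_cast
    ring
  rw [← hS, Complex.sq_norm]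
  have : (Complex.normSq S : ℂ) = (2 : ℂ) ^ n := by rw [← Complex.mul_conj, key]
  have h2n : (Complex.normSq S : ℂ) = ((2 : ℝ) ^ n : ℝ) := by
    rw [this]; push_cast; ring
  exact_mod_cast h2n
end

section
/- Let V = (Z/2Z)^n and ℶ a mubent set of functions V → Z/4Z: a set of 2^n functions such that the difference of any two distinct members is bent (in the Z/4Z sense). Then the standard basis of C^{2^n} together with the bases M_B = {2^{-n/2} e_{a,B} : a ∈ V}, B ∈ ℶ, form a complete set of 2^n + 1 pairwise mutually unbiased orthonormal bases. -/
open Finset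

section Aux

lemma aux_neg_one_pow_mod (m : ℕ) : ((-1 : ℂ)) ^ m = (-1 : ℂ) ^ (m % 2) := by
  conv_lhs => rw [← Nat.div_add_mod m 2]
  rw [pow_add, pow_mul, neg_one_sq, one_pow, one_mul]

lemma aux_chi_add (x y : ZMod 2) :
    ((-1 : ℂ)) ^ ((x + y).val) = (-1 : ℂ) ^ x.val * (-1 : ℂ) ^ y.val := by
  rw [← pow_add, aux_neg_one_pow_mod (x.val + y.val), ZMod.val_add]

lemma aux_I_pow_mod (m : ℕ) : Complex.I ^ m = Complex.I ^ (m % 4) := by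
  conv_lhs => rw [← Nat.div_add_mod m 4]
  rw [pow_add, pow_mul, Complex.I_pow_four, one_pow, one_mul]

lemma aux_I_zval_add (x y : ZMod 4) :
    Complex.I ^ ((x + y).val) = Complex.I ^ x.val * Complex.I ^ y.val := by
  rw [← pow_add, aux_I_pow_mod (x.val + y.val), ZMod.val_add]

lemma aux_negI_pow (y : ZMod 4) : ((-Complex.I)) ^ y.val = Complex.I ^ ((-y).val) := by
  have h1 : Complex.I ^ y.val * (-Complex.I) ^ y.val = 1 := by
    rw [← mul_pow]; simp [Complex.I_mul_I]
  have h2 : Complex.I ^ y.val * Complex.I ^ ((-y).val) = 1 := by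
    rw [← aux_I_zval_add]; simp
  rw [eq_inv_of_mul_eq_one_right h1, eq_inv_of_mul_eq_one_right h2]

lemma aux_prod_term (x y : ZMod 2) (b b' : ZMod 4) :
    ((-1:ℂ)^x.val * Complex.I^b.val) * ((-1:ℂ)^y.val * (-Complex.I)^b'.val)
      = (-1:ℂ)^((x+y).val) * Complex.I^((b - b').val) := by
  rw [aux_chi_add, aux_negI_pow, sub_eq_add_neg, aux_I_zval_add]; ring

lemma aux_card_V (n : ℕ) : Fintype.card (Fin n → ZMod 2) = 2 ^ n := by
  simp [ZMod.card]

lemma aux_charSum (n : ℕ) (c : Fin n → ZMod 2) :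
    (∑ v : Fin n → ZMod 2, ((-1 : ℂ)) ^ ((∑ i, c i * v i).val)) =
      if c = 0 then (2 : ℂ) ^ n else 0 := by
  split_ifs with hc
  · subst hc
    simp [aux_card_V]
  · obtain ⟨j, hj⟩ : ∃ j, c j ≠ 0 := by
      by_contra h; push_neg at h; exact hc (funext h)
    have h2 : ∀ x : ZMod 2, x ≠ 0 → x = 1 := by decide
    have hj1 : c j = 1 := h2 _ hj
    refine Finset.sum_ninvolution (fun v => Function.update v j (v j + 1)) ?_ ?_
      (fun _ => Finset.mem_univ _) ?_
    · intro v
      have key : ∀ w : Fin n → ZMod 2,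
          (∑ i, c i * w i) = c j * w j + ∑ i ∈ Finset.univ.erase j, c i * w i :=
        fun w => (Finset.add_sum_erase Finset.univ (fun i => c i * w i) (Finset.mem_univ j)).symm
      have hsum : (∑ i, c i * (Function.update v j (v j + 1)) i) = (∑ i, c i * v i) + 1 := by
        rw [key, key v, Function.update_self, hj1, one_mul, one_mul]
        have : ∑ i ∈ Finset.univ.erase j, c i * (Function.update v j (v j + 1)) i
            = ∑ i ∈ Finset.univ.erase j, c i * v i := by
          refine Finset.sum_congr rfl (fun i hi => ?_)
          rw [Function.update_of_ne (Finset.mem_erase.mp hi).1]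
        rw [this]; ring
      rw [hsum, aux_chi_add]
      have h1v : ((1 : ZMod 2)).val = 1 := rfl
      rw [h1v]; ring
    · intro v _ hcontra
      have h := congrFun hcontra j
      simp only [Function.update_self] at h
      exact one_ne_zero (add_eq_left.mp h)
    · intro v
      funext i
      by_cases hi : i = j
      · subst hi; simp [Function.update_self]
        have : ∀ x : ZMod 2, x + 1 + 1 = x := by decide
        exact this _
      · simp [Function.update_of_ne hi]

lemma aux_conj_term (N : ℝ) (x : ZMod 2) (b : ZMod 4) :
    (starRingEnd ℂ) ((N : ℂ)⁻¹ * ((-1:ℂ)^x.val * Complex.I^b.val)) =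
      (N : ℂ)⁻¹ * ((-1:ℂ)^x.val * (-Complex.I)^b.val) := by
  simp [map_mul, map_inv₀, Complex.conj_ofReal, map_pow, Complex.conj_I]

lemma aux_dot_add_left {n : ℕ} (a a' v : Fin n → ZMod 2) :
    (∑ i, (a i + a' i) * v i) = (∑ i, a i * v i) + (∑ i, a' i * v i) := by
  rw [← Finset.sum_add_distrib]; simp [add_mul]

lemma aux_inner_formula {n : ℕ} (B B' : (Fin n → ZMod 2) → ZMod 4) (a a' : Fin n → ZMod 2) :
    (∑ v, (((Real.sqrt (2^n) : ℂ))⁻¹ * ((-1:ℂ)^((∑ i, a i * v i).val) * Complex.I^((B v).val))) *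
      (starRingEnd ℂ) (((Real.sqrt (2^n) : ℂ))⁻¹ * ((-1:ℂ)^((∑ i, a' i * v i).val) * Complex.I^((B' v).val))))
    = ((Real.sqrt (2^n) : ℂ))⁻¹ * ((Real.sqrt (2^n) : ℂ))⁻¹ *
      ∑ v, (-1:ℂ)^((∑ i, (a i + a' i) * v i).val) * Complex.I^((B v - B' v).val) := by
  rw [Finset.mul_sum]
  refine Finset.sum_congr rfl (fun v _ => ?_)
  rw [aux_conj_term, aux_dot_add_left, ← aux_prod_term]
  ring

lemma aux_rsq (n : ℕ) :
    ((Real.sqrt (2^n) : ℂ))⁻¹ * ((Real.sqrt (2^n) : ℂ))⁻¹ * (2:ℂ)^n = 1 := by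
  have h : (Real.sqrt (2^n)) * Real.sqrt (2^n) = 2^n := Real.mul_self_sqrt (by positivity)
  have h2 : ((Real.sqrt (2^n) : ℂ)) * ((Real.sqrt (2^n) : ℂ)) = (2:ℂ)^n := by
    rw [← Complex.ofReal_mul, h]; push_cast; ring
  rw [← mul_inv, h2, inv_mul_cancel₀ (pow_ne_zero _ two_ne_zero)]

lemma aux_add_self_eq_zero_iff {n : ℕ} (a a' : Fin n → ZMod 2) : a + a' = 0 ↔ a = a' := by
  constructor
  · intro h; funext i
    have := congrFun h i
    have h2 : ∀ x y : ZMod 2, x + y = 0 → x = y := by decide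
    exact h2 _ _ this
  · rintro rfl; funext i
    have h2 : ∀ x : ZMod 2, x + x = 0 := by decide
    exact h2 _

lemma aux_onb_sum {n : ℕ} (B : (Fin n → ZMod 2) → ZMod 4) (a a' : Fin n → ZMod 2) :
    (∑ v, (((Real.sqrt (2^n) : ℂ))⁻¹ * ((-1:ℂ)^((∑ i, a i * v i).val) * Complex.I^((B v).val))) *
      (starRingEnd ℂ) (((Real.sqrt (2^n) : ℂ))⁻¹ * ((-1:ℂ)^((∑ i, a' i * v i).val) * Complex.I^((B v).val))))
    = if a = a' then 1 else 0 := by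
  rw [aux_inner_formula]
  have : ∀ v : Fin n → ZMod 2,
      (-1:ℂ)^((∑ i, (a i + a' i) * v i).val) * Complex.I^((B v - B v).val)
      = (-1:ℂ)^((∑ i, (a + a') i * v i).val) := by
    intro v; simp
  rw [Finset.sum_congr rfl (fun v _ => this v), aux_charSum]
  by_cases h : a + a' = 0
  · rw [if_pos h, if_pos ((aux_add_self_eq_zero_iff a a').mp h), aux_rsq]
  · rw [if_neg h, if_neg (fun he => h ((aux_add_self_eq_zero_iff a a').mpr he)), mul_zero]

lemma aux_sum_I_pow {n : ℕ} (g : (Fin n → ZMod 2) → ZMod 4)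
    (h0 : (Finset.univ.filter (fun v => g v = 0)).card =
          (Finset.univ.filter (fun v => g v = 2)).card)
    (h1 : (Finset.univ.filter (fun v => g v = 1)).card =
          (Finset.univ.filter (fun v => g v = 3)).card) :
    ∑ v, Complex.I ^ ((g v).val) = 0 := by
  have hfib := Finset.sum_fiberwise (Finset.univ : Finset (Fin n → ZMod 2)) g
    (fun v => Complex.I ^ ((g v).val))
  rw [← hfib]
  have hconst : ∀ k : ZMod 4,
      (∑ v ∈ Finset.univ.filter (fun v => g v = k), Complex.I ^ ((g v).val))
        = ((Finset.univ.filter (fun v => g v = k)).card : ℂ) * Complex.I ^ (k.val) := by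
    intro k
    rw [Finset.sum_congr rfl (fun v hv => by
      rw [(Finset.mem_filter.mp hv).2]), Finset.sum_const, nsmul_eq_mul]
  rw [Finset.sum_congr rfl (fun k _ => hconst k)]
  have hexp : (∑ k : ZMod 4, ((Finset.univ.filter (fun v => g v = k)).card : ℂ) * Complex.I ^ (k.val))
      = ((Finset.univ.filter (fun v => g v = (0:ZMod 4))).card : ℂ) * Complex.I ^ ((0:ZMod 4).val)
      + ((Finset.univ.filter (fun v => g v = (1:ZMod 4))).card : ℂ) * Complex.I ^ ((1:ZMod 4).val)
      + ((Finset.univ.filter (fun v => g v = (2:ZMod 4))).card : ℂ) * Complex.I ^ ((2:ZMod 4).val)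
      + ((Finset.univ.filter (fun v => g v = (3:ZMod 4))).card : ℂ) * Complex.I ^ ((3:ZMod 4).val) :=
    Fin.sum_univ_four _
  rw [hexp]
  simp only [show ((0:ZMod 4)).val = 0 from rfl, show ((1:ZMod 4)).val = 1 from rfl,
    show ((2:ZMod 4)).val = 2 from rfl, show ((3:ZMod 4)).val = 3 from rfl]
  rw [h0, h1]
  rw [pow_zero, pow_one, Complex.I_sq, show Complex.I ^ 3 = -Complex.I by
    rw [pow_succ, Complex.I_sq]; ring]
  ring

lemma aux_TconjT {n : ℕ} (B B' : (Fin n → ZMod 2) → ZMod 4) (c : Fin n → ZMod 2)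
    (hcnt : ∀ u : Fin n → ZMod 2, u ≠ 0 →
      ((Finset.univ.filter (fun v =>
        (B (v + u) - B' (v + u)) - (B v - B' v) = 0)).card =
       (Finset.univ.filter (fun v =>
        (B (v + u) - B' (v + u)) - (B v - B' v) = 2)).card ∧
       (Finset.univ.filter (fun v =>
        (B (v + u) - B' (v + u)) - (B v - B' v) = 1)).card =
       (Finset.univ.filter (fun v =>
        (B (v + u) - B' (v + u)) - (B v - B' v) = 3)).card)) :
    (∑ v, (-1:ℂ)^((∑ i, c i * v i).val) * Complex.I^((B v - B' v).val)) *
      (starRingEnd ℂ) (∑ v, (-1:ℂ)^((∑ i, c i * v i).val) * Complex.I^((B v - B' v).val))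
      = (2:ℂ)^n := by
  rw [map_sum]
  have hconj : ∀ w : Fin n → ZMod 2,
      (starRingEnd ℂ) ((-1:ℂ)^((∑ i, c i * w i).val) * Complex.I^((B w - B' w).val))
        = (-1:ℂ)^((∑ i, c i * w i).val) * (-Complex.I)^((B w - B' w).val) := by
    intro w; simp [map_mul, map_pow, Complex.conj_I]
  rw [Finset.sum_congr rfl (fun w _ => hconj w)]
  rw [Finset.sum_mul_sum]
  rw [Finset.sum_comm]
  have hre : ∀ w : Fin n → ZMod 2,
      (∑ x, ((-1:ℂ)^((∑ i, c i * x i).val) * Complex.I^((B x - B' x).val)) *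
        ((-1:ℂ)^((∑ i, c i * w i).val) * (-Complex.I)^((B w - B' w).val)))
      = ∑ u, ((-1:ℂ)^((∑ i, c i * (w + u) i).val) * Complex.I^((B (w+u) - B' (w+u)).val)) *
        ((-1:ℂ)^((∑ i, c i * w i).val) * (-Complex.I)^((B w - B' w).val)) := by
    intro w
    exact (Fintype.sum_equiv (Equiv.addLeft w)
      (fun u => ((-1:ℂ)^((∑ i, c i * (w + u) i).val) * Complex.I^((B (w+u) - B' (w+u)).val)) *
        ((-1:ℂ)^((∑ i, c i * w i).val) * (-Complex.I)^((B w - B' w).val)))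
      _ (fun u => rfl)).symm
  rw [Finset.sum_congr rfl (fun w _ => hre w), Finset.sum_comm]
  have hterm : ∀ u w : Fin n → ZMod 2,
      ((-1:ℂ)^((∑ i, c i * (w + u) i).val) * Complex.I^((B (w+u) - B' (w+u)).val)) *
        ((-1:ℂ)^((∑ i, c i * w i).val) * (-Complex.I)^((B w - B' w).val))
      = (-1:ℂ)^((∑ i, c i * u i).val) *
        Complex.I^(((B (w+u) - B' (w+u)) - (B w - B' w)).val) := by
    intro u w
    rw [aux_prod_term]
    congr 2
    have hd : (∑ i, c i * (w + u) i) + (∑ i, c i * w i) = ∑ i, c i * u i := by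
      have : ∀ i : Fin n, c i * (w + u) i = c i * w i + c i * u i := by
        intro i; simp [mul_add]
      rw [Finset.sum_congr rfl (fun i _ => this i), Finset.sum_add_distrib]
      have h2 : ∀ x y : ZMod 2, x + y + x = y := by decide
      exact h2 _ _
    rw [hd]
  rw [Finset.sum_congr rfl (fun u _ =>
    Finset.sum_congr rfl (fun w _ => hterm u w))]
  have hinner : ∀ u : Fin n → ZMod 2,
      (∑ w, (-1:ℂ)^((∑ i, c i * u i).val) *
        Complex.I^(((B (w+u) - B' (w+u)) - (B w - B' w)).val))
      = (-1:ℂ)^((∑ i, c i * u i).val) *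
        ∑ w, Complex.I^(((B (w+u) - B' (w+u)) - (B w - B' w)).val) := by
    intro u; rw [Finset.mul_sum]
  rw [Finset.sum_congr rfl (fun u _ => hinner u)]
  rw [Finset.sum_eq_single_of_mem 0 (Finset.mem_univ 0)]
  · have hz : ∀ w : Fin n → ZMod 2,
        ((B (w+(0:Fin n → ZMod 2)) - B' (w+0)) - (B w - B' w)) = 0 := by
      intro w; rw [add_zero]; ring
    have hz2 : (∑ w : Fin n → ZMod 2,
        Complex.I ^ ((B (w+(0:Fin n → ZMod 2)) - B' (w+0) - (B w - B' w)).val)) = (2:ℂ)^n := by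
      rw [Finset.sum_congr rfl (fun w _ => by rw [hz w])]
      simp [aux_card_V, show ((0:ZMod 4)).val = 0 from rfl]
    rw [hz2]
    have hc0 : (∑ i, c i * (0 : Fin n → ZMod 2) i) = 0 := by simp
    rw [hc0]
    simp [show ((0:ZMod 2)).val = 0 from rfl]
  · intro u _ hu
    have := hcnt u hu
    rw [aux_sum_I_pow _ this.1 this.2, mul_zero]

end Aux

/-- The standard basis vector `e_a` of `ℂ^V`, `V = (ℤ/2ℤ)^n`. -/
noncomputable def stdVec2 (n : ℕ) (a : Fin n → ZMod 2) : (Fin n → ZMod 2) → ℂ :=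
  fun v => if v = a then 1 else 0

theorem stmt_10 (n : ℕ)
    (beth : Finset (((Fin n → ZMod 2) → ZMod 4)))
    (hcard : beth.card = 2 ^ n)
    (hmubent : ∀ B ∈ beth, ∀ B' ∈ beth, B ≠ B' →
      ∀ u : Fin n → ZMod 2, u ≠ 0 →
        ((Finset.univ.filter (fun v =>
          (B (v + u) - B' (v + u)) - (B v - B' v) = 0)).card =
         (Finset.univ.filter (fun v =>
          (B (v + u) - B' (v + u)) - (B v - B' v) = 2)).card ∧
         (Finset.univ.filter (fun v =>
          (B (v + u) - B' (v + u)) - (B v - B' v) = 1)).card =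
         (Finset.univ.filter (fun v =>
          (B (v + u) - B' (v + u)) - (B v - B' v) = 3)).card))
    (f : (((Fin n → ZMod 2) → ZMod 4)) → (Fin n → ZMod 2) → (Fin n → ZMod 2) → ℂ)
    (hf : ∀ B a v, f B a v = ((Real.sqrt (2 ^ n) : ℂ))⁻¹ *
      ((-1 : ℂ) ^ ((∑ i, a i * v i).val) * Complex.I ^ ((B v).val))) :
    -- the standard basis is orthonormal
    (∀ a a' : Fin n → ZMod 2,
      ∑ v, stdVec2 n a v * (starRingEnd ℂ) (stdVec2 n a' v)
        = if a = a' then 1 else 0) ∧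
    -- each `M_B` is an orthonormal basis
    (∀ B ∈ beth, ∃ b : OrthonormalBasis (Fin n → ZMod 2) ℂ
        (EuclideanSpace ℂ (Fin n → ZMod 2)), ∀ a, b a = f B a) ∧
    (∀ B ∈ beth, ∀ a a' : Fin n → ZMod 2,
      ∑ v, f B a v * (starRingEnd ℂ) (f B a' v) = if a = a' then 1 else 0) ∧
    -- the standard basis and each `M_B` are mutually unbiased
    (∀ B ∈ beth, ∀ a a' : Fin n → ZMod 2,
      ‖∑ v, stdVec2 n a v * (starRingEnd ℂ) (f B a' v)‖
        = 1 / Real.sqrt (2 ^ n)) ∧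
    -- distinct bases `M_B`, `M_{B'}` are mutually unbiased
    (∀ B ∈ beth, ∀ B' ∈ beth, B ≠ B' → ∀ a a' : Fin n → ZMod 2,
      ‖∑ v, f B a v * (starRingEnd ℂ) (f B' a' v)‖
        = 1 / Real.sqrt (2 ^ n)) ∧
    -- there are `2 ^ n + 1` bases in all
    beth.card + 1 = 2 ^ n + 1 := by
  have hs0 : (0:ℝ) < Real.sqrt (2 ^ n) := Real.sqrt_pos.mpr (by positivity)
  -- part 3 first (used by part 2)
  have part3 : ∀ B ∈ beth, ∀ a a' : Fin n → ZMod 2,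
      ∑ v, f B a v * (starRingEnd ℂ) (f B a' v) = if a = a' then 1 else 0 := by
    intro B _ a a'
    simp only [hf]
    exact aux_onb_sum B a a'
  have habsf : ∀ B a v, ‖f B a v‖ = (Real.sqrt (2 ^ n))⁻¹ := by
    intro B a v
    rw [hf]
    rw [norm_mul, norm_mul, norm_inv, Complex.norm_real, Real.norm_of_nonneg (Real.sqrt_nonneg _),
      norm_pow, norm_pow, Complex.norm_I, one_pow, mul_one]
    have : ‖(-1 : ℂ)‖ = 1 := by simp
    rw [this, one_pow, mul_one]
  refine ⟨?_, ?_, part3, ?_, ?_, by rw [hcard]⟩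
  · -- standard basis orthonormal
    intro a a'
    have : ∀ v : Fin n → ZMod 2, stdVec2 n a v * (starRingEnd ℂ) (stdVec2 n a' v)
        = if v = a then (if v = a' then 1 else 0) else 0 := by
      intro v
      simp only [stdVec2]
      by_cases h1 : v = a <;> by_cases h2 : v = a' <;> simp [h1, h2]
    rw [Finset.sum_congr rfl (fun v _ => this v), Finset.sum_ite_eq' Finset.univ a
      (fun v => if v = a' then (1:ℂ) else 0), if_pos (Finset.mem_univ a)]
  · -- orthonormal basis existence
    intro B hB
    have hON : Orthonormal ℂ
        (fun a => ((WithLp.equiv 2 ((Fin n → ZMod 2) → ℂ)).symm (f B a) :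
          EuclideanSpace ℂ (Fin n → ZMod 2))) := by
      rw [orthonormal_iff_ite]
      intro a a'
      have : (inner ℂ ((WithLp.equiv 2 ((Fin n → ZMod 2) → ℂ)).symm (f B a) :
            EuclideanSpace ℂ (Fin n → ZMod 2))
            ((WithLp.equiv 2 ((Fin n → ZMod 2) → ℂ)).symm (f B a')) : ℂ)
          = ∑ v, f B a' v * (starRingEnd ℂ) (f B a v) := by
        rw [PiLp.inner_apply]
        refine Finset.sum_congr rfl (fun v _ => ?_)
        simp only [WithLp.equiv_symm_apply, WithLp.ofLp_toLp, RCLike.inner_apply]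
      rw [this, part3 B hB a' a]
      by_cases h : a = a'
      · rw [if_pos h.symm, if_pos h]
      · rw [if_neg (fun he => h he.symm), if_neg h]
    have hcardeq : Fintype.card (Fin n → ZMod 2)
        = Module.finrank ℂ (EuclideanSpace ℂ (Fin n → ZMod 2)) := by
      rw [finrank_euclideanSpace]
    have hspan := hON.linearIndependent.span_eq_top_of_card_eq_finrank hcardeq
    refine ⟨OrthonormalBasis.mk hON hspan.ge, fun a => ?_⟩
    have := OrthonormalBasis.coe_mk hON hspan.ge
    rw [congrFun this a]
    rfl
  · -- std vs M_B unbiased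
    intro B _ a a'
    have : ∀ v : Fin n → ZMod 2, stdVec2 n a v * (starRingEnd ℂ) (f B a' v)
        = if v = a then (starRingEnd ℂ) (f B a' v) else 0 := by
      intro v; simp only [stdVec2]; by_cases h : v = a <;> simp [h]
    rw [Finset.sum_congr rfl (fun v _ => this v), Finset.sum_ite_eq' Finset.univ a
      (fun v => (starRingEnd ℂ) (f B a' v)), if_pos (Finset.mem_univ a)]
    rw [Complex.norm_conj, habsf, one_div]
  · -- distinct M_B, M_B' unbiased
    intro B hB B' hB' hne a a'
    simp only [hf]
    rw [aux_inner_formula B B' a a']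
    have hT := aux_TconjT B B' (fun i => a i + a' i) (hmubent B hB B' hB' hne)
    set T := ∑ v, (-1:ℂ)^((∑ i, (a i + a' i) * v i).val) * Complex.I^((B v - B' v).val) with hTdef
    have hTT : T * (starRingEnd ℂ) T = (2:ℂ)^n := hT
    have hnormSq : Complex.normSq T = 2 ^ n := by
      have := Complex.mul_conj T
      rw [hTT] at this
      have h2 : ((Complex.normSq T : ℝ) : ℂ) = (((2:ℝ) ^ n : ℝ) : ℂ) := by
        rw [← this]; push_cast; ring
      exact_mod_cast h2
    have habsT : ‖T‖ = Real.sqrt (2 ^ n) := by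
      rw [Complex.norm_def, hnormSq]
    rw [norm_mul, norm_mul, norm_inv, Complex.norm_real,
      Real.norm_of_nonneg (Real.sqrt_nonneg _), habsT]
    field_simp
end

section
/- Let M be a symmetric n×n matrix over Z/4Z such that its reduction M' mod 2 is nonsingular over Z/2Z. Then B(v) = v̂ M v̂ᵀ defines a bent function (Z/2Z)^n → Z/4Z: for every nonzero u ∈ (Z/2Z)^n, with n(u,k) = #{v : B(v+u) − B(v) = k}, we have n(u,0) = n(u,2) and n(u,1) = n(u,3). In fact, two of the four counts n(u,k) equal 2^{n-1} and the other two equal 0. -/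
open Finset Matrix

/-- The coordinatewise lift `(ℤ/2ℤ)^n → (ℤ/4ℤ)^n` sending `0 ↦ 0`, `1 ↦ 1`. -/
def liftVec (n : ℕ) (v : Fin n → ZMod 2) : Fin n → ZMod 4 :=
  fun i => ((v i).val : ZMod 4)

lemma liftVec_add (n : ℕ) (v u : Fin n → ZMod 2) :
    liftVec n (v + u) = liftVec n v + liftVec n u - (2 : ZMod 4) • (liftVec n v * liftVec n u) := by
  funext i
  simp only [liftVec, Pi.add_apply, Pi.sub_apply, Pi.mul_apply, Pi.smul_apply, smul_eq_mul]
  exact (by decide : ∀ a b : ZMod 2, (((a + b).val : ZMod 4)) =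
    (a.val : ZMod 4) + (b.val : ZMod 4) - 2 * ((a.val : ZMod 4) * (b.val : ZMod 4))) (v i) (u i)

lemma count_dot (n : ℕ) (c : Fin n → ZMod 2) (hc : c ≠ 0) :
    (univ.filter (fun v : Fin n → ZMod 2 => v ⬝ᵥ c = 0)).card = 2 ^ (n - 1) ∧
    (univ.filter (fun v : Fin n → ZMod 2 => v ⬝ᵥ c = 1)).card = 2 ^ (n - 1) := by
  obtain ⟨i, hi⟩ := Function.ne_iff.mp hc
  have hci : c i = 1 := (by decide : ∀ x : ZMod 2, x ≠ 0 → x = 1) _ hi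
  have hsingle : (Pi.single i (1 : ZMod 2)) ⬝ᵥ c = 1 := by
    rw [single_dotProduct, one_mul, hci]
  have hee : (Pi.single i (1 : ZMod 2)) + (Pi.single i 1 : Fin n → ZMod 2) = 0 := by
    rw [← Pi.single_add, (by decide : (1:ZMod 2)+1 = 0), Pi.single_zero]
  have hbij : (univ.filter (fun v : Fin n → ZMod 2 => v ⬝ᵥ c = 0)).card
      = (univ.filter (fun v : Fin n → ZMod 2 => v ⬝ᵥ c = 1)).card := by
    apply Finset.card_bij' (fun v _ => v + Pi.single i 1) (fun v _ => v + Pi.single i 1)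
    · intro v _; rw [add_assoc, hee, add_zero]
    · intro v _; rw [add_assoc, hee, add_zero]
    · intro v hv
      simp only [mem_filter, mem_univ, true_and] at hv ⊢
      rw [add_dotProduct, hv, hsingle, zero_add]
    · intro v hv
      simp only [mem_filter, mem_univ, true_and] at hv ⊢
      rw [add_dotProduct, hv, hsingle]
      decide
  have htot : (univ.filter (fun v : Fin n → ZMod 2 => v ⬝ᵥ c = 0)).card
      + (univ.filter (fun v : Fin n → ZMod 2 => v ⬝ᵥ c = 1)).card = 2 ^ n := by
    have h1 : (univ.filter (fun v : Fin n → ZMod 2 => v ⬝ᵥ c = 1))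
        = (univ.filter (fun v : Fin n → ZMod 2 => ¬ (v ⬝ᵥ c = 0))) := by
      apply Finset.filter_congr
      intro v _
      exact (by decide : ∀ x : ZMod 2, x = 1 ↔ ¬ x = 0) _
    rw [h1, Finset.card_filter_add_card_filter_not, Finset.card_univ]
    simp [Fintype.card_fun, ZMod.card]
  have hn : n - 1 + 1 = n := Nat.succ_pred_eq_of_pos i.pos
  have h2n : 2 ^ n = 2 * 2 ^ (n - 1) := by
    conv_lhs => rw [← hn]
    rw [pow_succ]; ring
  omega

theorem stmt_13 (n : ℕ) (M : Matrix (Fin n) (Fin n) (ZMod 4)) (hM : Mᵀ = M)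
    (hM' : IsUnit (M.map (ZMod.castHom (show (2:ℕ) ∣ 4 by norm_num) (ZMod 2))).det)
    (B : (Fin n → ZMod 2) → ZMod 4)
    (hB : ∀ v, B v = liftVec n v ⬝ᵥ M.mulVec (liftVec n v))
    (N : (Fin n → ZMod 2) → ZMod 4 → ℕ)
    (hN : ∀ u k, N u k = (Finset.univ.filter (fun v => B (v + u) - B v = k)).card) :
    ∀ u : Fin n → ZMod 2, u ≠ 0 →
      (N u 0 = N u 2 ∧ N u 1 = N u 3) ∧
      ((N u 0 = 2 ^ (n - 1) ∧ N u 2 = 2 ^ (n - 1) ∧ N u 1 = 0 ∧ N u 3 = 0) ∨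
       (N u 1 = 2 ^ (n - 1) ∧ N u 3 = 2 ^ (n - 1) ∧ N u 0 = 0 ∧ N u 2 = 0)) := by
  intro u hu
  have h24 : (2:ℕ) ∣ 4 := by norm_num
  set φ : ZMod 4 →+* ZMod 2 := ZMod.castHom h24 (ZMod 2) with hφdef
  set M' : Matrix (Fin n) (Fin n) (ZMod 2) := M.map φ with hM'def
  have hsymm : ∀ x y : Fin n → ZMod 4, x ⬝ᵥ M *ᵥ y = y ⬝ᵥ M *ᵥ x := by
    intro x y
    calc x ⬝ᵥ M *ᵥ y = (x ᵥ* M) ⬝ᵥ y := Matrix.dotProduct_mulVec _ _ _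
    _ = (M *ᵥ x) ⬝ᵥ y := by rw [← Matrix.vecMul_transpose, hM]
    _ = y ⬝ᵥ (M *ᵥ x) := dotProduct_comm _ _
  set k₀ : ZMod 4 := liftVec n u ⬝ᵥ M *ᵥ liftVec n u with hk₀def
  have key : ∀ v, B (v + u) - B v = k₀ + 2 * (liftVec n v ⬝ᵥ M *ᵥ liftVec n u) := by
    intro v
    rw [hB, hB, liftVec_add]
    set a := liftVec n v
    set b := liftVec n u
    simp only [Matrix.mulVec_add, Matrix.mulVec_sub, Matrix.mulVec_smul,
      add_dotProduct, sub_dotProduct, smul_dotProduct,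
      dotProduct_add, dotProduct_sub, dotProduct_smul, smul_eq_mul]
    rw [hsymm b a, hsymm (a * b) a, hsymm (a * b) b]
    have h4 : (4 : ZMod 4) = 0 := by decide
    linear_combination (-(a ⬝ᵥ M *ᵥ (a * b)) - b ⬝ᵥ M *ᵥ (a * b) + (a*b) ⬝ᵥ M *ᵥ (a*b)) * h4
  have hcast : ∀ v : Fin n → ZMod 2, φ ∘ liftVec n v = v := by
    intro v; funext i
    exact (by decide : ∀ x : ZMod 2, (ZMod.castHom (by norm_num : (2:ℕ) ∣ 4) (ZMod 2)) ((x.val : ZMod 4)) = x) (v i)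
  have hL : ∀ v : Fin n → ZMod 2, φ (liftVec n v ⬝ᵥ M *ᵥ liftVec n u) = v ⬝ᵥ M' *ᵥ u := by
    intro v
    rw [RingHom.map_dotProduct]
    have h1 : φ ∘ (M *ᵥ liftVec n u) = M' *ᵥ (φ ∘ liftVec n u) :=
      funext fun i => RingHom.map_mulVec φ M _ i
    rw [h1, hcast, hcast]
  have key2 : ∀ v, B (v + u) - B v = k₀ + 2 * (((v ⬝ᵥ M' *ᵥ u).val : ZMod 4)) := by
    intro v
    rw [key v, ← hL v]
    congr 1
    exact (by decide : ∀ z : ZMod 4, 2 * z = 2 * (((ZMod.castHom (by norm_num : (2:ℕ) ∣ 4) (ZMod 2)) z).val : ZMod 4)) _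
  have hc : M' *ᵥ u ≠ 0 := by
    intro h
    have h2 : M'⁻¹ *ᵥ (M' *ᵥ u) = 0 := by rw [h, Matrix.mulVec_zero]
    rw [Matrix.mulVec_mulVec, Matrix.nonsing_inv_mul _ hM', Matrix.one_mulVec] at h2
    exact hu h2
  obtain ⟨h0, h1⟩ := count_dot n (M' *ᵥ u) hc
  have hNk0 : N u k₀ = 2 ^ (n - 1) := by
    rw [hN]
    simp only [key2]
    simp only [(by decide : ∀ (c : ZMod 4) (x : ZMod 2),
      (c + 2 * ((x.val : ZMod 4)) = c) ↔ x = 0)]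
    exact h0
  have hNk2 : N u (k₀ + 2) = 2 ^ (n - 1) := by
    rw [hN]
    simp only [key2]
    simp only [(by decide : ∀ (c : ZMod 4) (x : ZMod 2),
      (c + 2 * ((x.val : ZMod 4)) = c + 2) ↔ x = 1)]
    exact h1
  have hNother : ∀ k : ZMod 4, k ≠ k₀ → k ≠ k₀ + 2 → N u k = 0 := by
    intro k hk1 hk2
    rw [hN]
    rw [Finset.filter_false_of_mem, Finset.card_empty]
    intro v _
    rw [key2 v]
    exact (by decide : ∀ (c k : ZMod 4) (x : ZMod 2), k ≠ c → k ≠ c + 2 →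
      ¬ (c + 2 * ((x.val : ZMod 4)) = k)) k₀ k _ hk1 hk2
  rcases (by decide : ∀ x : ZMod 4, x = 0 ∨ x = 1 ∨ x = 2 ∨ x = 3) k₀ with h | h | h | h <;>
    rw [h] at hNk0 hNk2 hNother
  · have e2 : N u 2 = 2 ^ (n-1) := by rw [show (2:ZMod 4) = 0 + 2 by decide]; exact hNk2
    have e1 : N u 1 = 0 := hNother 1 (by decide) (by decide)
    have e3 : N u 3 = 0 := hNother 3 (by decide) (by decide)
    exact ⟨⟨by rw [hNk0, e2], by rw [e1, e3]⟩, Or.inl ⟨hNk0, e2, e1, e3⟩⟩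
  · have e3 : N u 3 = 2 ^ (n-1) := by rw [show (3:ZMod 4) = 1 + 2 by decide]; exact hNk2
    have e0 : N u 0 = 0 := hNother 0 (by decide) (by decide)
    have e2 : N u 2 = 0 := hNother 2 (by decide) (by decide)
    exact ⟨⟨by rw [e0, e2], by rw [hNk0, e3]⟩, Or.inr ⟨hNk0, e3, e0, e2⟩⟩
  · have e0 : N u 0 = 2 ^ (n-1) := by rw [show (0:ZMod 4) = 2 + 2 by decide]; exact hNk2
    have e1 : N u 1 = 0 := hNother 1 (by decide) (by decide)
    have e3 : N u 3 = 0 := hNother 3 (by decide) (by decide)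
    exact ⟨⟨by rw [hNk0, e0], by rw [e1, e3]⟩, Or.inl ⟨e0, hNk0, e1, e3⟩⟩
  · have e1 : N u 1 = 2 ^ (n-1) := by rw [show (1:ZMod 4) = 3 + 2 by decide]; exact hNk2
    have e0 : N u 0 = 0 := hNother 0 (by decide) (by decide)
    have e2 : N u 2 = 0 := hNother 2 (by decide) (by decide)
    exact ⟨⟨by rw [e0, e2], by rw [e1, hNk0]⟩, Or.inr ⟨e1, hNk0, e0, e2⟩⟩
end

section
/- Let p be an odd prime, N = p^n, and suppose ℶ is a mubent set of functions V = (Z/pZ)^n → Z/pZ. For B, B' ∈ ℶ distinct and a, a' ∈ V, the vectors x = p^{-n/2} e_{a,B} and y = p^{-n/2} e_{a',B'} satisfy |(x,y)| = 1/√N; in particular distinct bases M_B and M_{B'} are mutually unbiased. -/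
open Finset

theorem stmt_19 (p n : ℕ) [hp : Fact p.Prime] (hodd : Odd p)
    (ζ : ℂ) (hζ : IsPrimitiveRoot ζ p)
    (beth : Finset (((Fin n → ZMod p) → ZMod p)))
    (hcard : beth.card = p ^ n)
    (hmubent : ∀ B ∈ beth, ∀ B' ∈ beth, B ≠ B' →
      ∀ u : Fin n → ZMod p, u ≠ 0 → ∀ c : ZMod p,
        (Finset.univ.filter
          (fun v => (B (v + u) - B' (v + u)) - (B v - B' v) = c)).card = p ^ (n - 1))
    (B : ((Fin n → ZMod p) → ZMod p)) (hB : B ∈ beth)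
    (B' : ((Fin n → ZMod p) → ZMod p)) (hB' : B' ∈ beth) (hBB' : B ≠ B')
    (a a' : Fin n → ZMod p) :
    ‖(∑ v : Fin n → ZMod p,
        (((Real.sqrt (p ^ n) : ℂ))⁻¹ * ζ ^ (((∑ i, a i * v i) + B v).val)) *
          (starRingEnd ℂ)
            (((Real.sqrt (p ^ n) : ℂ))⁻¹ * ζ ^ (((∑ i, a' i * v i) + B' v).val)))‖
      = 1 / Real.sqrt (p ^ n) := by
  have hp1 : 1 < p := hp.out.one_lt
  have hpne : p ≠ 0 := hp.out.ne_zero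
  set e : ZMod p → ℂ := fun c => ζ ^ c.val with he
  have hζp : ζ ^ p = 1 := hζ.pow_eq_one
  have hpowmod : ∀ m : ℕ, ζ ^ (m % p) = ζ ^ m := by
    intro m
    conv_rhs => rw [← Nat.div_add_mod m p]
    rw [pow_add, pow_mul, hζp, one_pow, one_mul]
  have hadd : ∀ x y : ZMod p, e (x + y) = e x * e y := by
    intro x y
    simp only [he]
    rw [ZMod.val_add, hpowmod, pow_add]
  have he0 : e 0 = 1 := by
    simp [he, ZMod.val_zero]
  have hconj : ∀ c, (starRingEnd ℂ) (e c) = e (-c) := by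
    intro c
    have h1 : e (-c) * e c = 1 := by rw [← hadd, neg_add_cancel, he0]
    have habs : ‖e c‖ = 1 := by
      refine Complex.norm_eq_one_of_pow_eq_one ?_ hpne
      rw [he, ← pow_mul, mul_comm, pow_mul, hζp, one_pow]
    rw [← Complex.inv_eq_conj habs]
    exact (eq_inv_of_mul_eq_one_left h1).symm
  have hsum0 : ∑ c : ZMod p, e c = 0 := by
    have h : ∑ c : ZMod p, e c = ∑ i ∈ Finset.range p, ζ ^ i := by
      refine Finset.sum_nbij' (fun c => c.val) (fun i => (i : ZMod p)) ?_ ?_ ?_ ?_ ?_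
      · intro c _; exact Finset.mem_range.2 (ZMod.val_lt c)
      · intro i _; exact Finset.mem_univ _
      · intro c _; exact ZMod.natCast_rightInverse c
      · intro i hi; exact ZMod.val_cast_of_lt (Finset.mem_range.1 hi)
      · intro c _; rfl
    rw [h, hζ.geom_sum_eq_zero hp1]
  set g : (Fin n → ZMod p) → ZMod p :=
    fun v => ((∑ i, a i * v i) + B v) - ((∑ i, a' i * v i) + B' v) with hg
  set S : ℂ := ∑ v : Fin n → ZMod p, e (g v) with hS
  have hcardV : (Fintype.card (Fin n → ZMod p)) = p ^ n := by
    simp [ZMod.card]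
  have key : S * (starRingEnd ℂ) S = (p : ℂ) ^ n := by
    rw [hS, map_sum, Finset.sum_mul_sum]
    have step1 : ∀ v w : Fin n → ZMod p,
        e (g v) * (starRingEnd ℂ) (e (g w)) = e (g v - g w) := by
      intro v w
      rw [hconj, ← hadd, sub_eq_add_neg]
    calc (∑ v : Fin n → ZMod p, ∑ w : Fin n → ZMod p, e (g v) * (starRingEnd ℂ) (e (g w)))
        = ∑ v : Fin n → ZMod p, ∑ w : Fin n → ZMod p, e (g v - g w) := by
          exact Finset.sum_congr rfl fun v _ => Finset.sum_congr rfl fun w _ => step1 v w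
      _ = ∑ w : Fin n → ZMod p, ∑ v : Fin n → ZMod p, e (g v - g w) := Finset.sum_comm
      _ = ∑ w : Fin n → ZMod p, ∑ u : Fin n → ZMod p, e (g (w + u) - g w) := by
          refine Finset.sum_congr rfl fun w _ => ?_
          exact (Fintype.sum_equiv (Equiv.addLeft w) _ _ (fun u => by
            simp [Equiv.addLeft])).symm
      _ = ∑ u : Fin n → ZMod p, ∑ w : Fin n → ZMod p, e (g (w + u) - g w) := Finset.sum_comm
      _ = (p : ℂ) ^ n := by
          rw [Finset.sum_eq_single_of_mem (0 : Fin n → ZMod p) (Finset.mem_univ _)]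
          · simp only [add_zero, sub_self, he0]
            rw [Finset.sum_const, Finset.card_univ, hcardV]
            simp
          · intro u _ hu
            have hdec : ∀ w : Fin n → ZMod p, g (w + u) - g w =
                ((∑ i, a i * u i) - (∑ i, a' i * u i)) +
                  ((B (w + u) - B' (w + u)) - (B w - B' w)) := by
              intro w
              simp only [hg, Pi.add_apply, mul_add, Finset.sum_add_distrib]
              ring
            calc (∑ w : Fin n → ZMod p, e (g (w + u) - g w))
                = ∑ w : Fin n → ZMod p,
                    e ((∑ i, a i * u i) - (∑ i, a' i * u i)) *
                      e ((B (w + u) - B' (w + u)) - (B w - B' w)) := by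
                  refine Finset.sum_congr rfl fun w _ => ?_
                  rw [hdec w, hadd]
              _ = e ((∑ i, a i * u i) - (∑ i, a' i * u i)) *
                    ∑ w : Fin n → ZMod p, e ((B (w + u) - B' (w + u)) - (B w - B' w)) := by
                  rw [Finset.mul_sum]
              _ = 0 := by
                  rw [← Finset.sum_fiberwise' Finset.univ
                    (fun w => (B (w + u) - B' (w + u)) - (B w - B' w)) e]
                  have hfib : ∀ c : ZMod p,
                      (∑ w ∈ Finset.univ.filter
                        (fun w => (B (w + u) - B' (w + u)) - (B w - B' w) = c), e c)
                        = (p ^ (n - 1) : ℂ) * e c := by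
                    intro c
                    rw [Finset.sum_const, hmubent B hB B' hB' hBB' u hu c]
                    simp [nsmul_eq_mul]
                  rw [Finset.sum_congr rfl fun c _ => hfib c, ← Finset.mul_sum, hsum0,
                    mul_zero, mul_zero]
  have hnormSq : Complex.normSq S = (p : ℝ) ^ n := by
    have h2 : ((Complex.normSq S : ℝ) : ℂ) = (((p : ℝ) ^ n : ℝ) : ℂ) := by
      rw [← Complex.mul_conj, key]; push_cast; ring
    exact Complex.ofReal_injective h2
  have habsS : ‖S‖ = Real.sqrt ((p : ℝ) ^ n) := by
    rw [Complex.norm_def, hnormSq]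
  have hNpos : (0 : ℝ) < (p : ℝ) ^ n := by positivity
  have hsqrt_pos : (0 : ℝ) < Real.sqrt ((p : ℝ) ^ n) := Real.sqrt_pos.2 hNpos
  have hrw : (∑ v : Fin n → ZMod p,
        (((Real.sqrt (p ^ n) : ℂ))⁻¹ * ζ ^ (((∑ i, a i * v i) + B v).val)) *
          (starRingEnd ℂ)
            (((Real.sqrt (p ^ n) : ℂ))⁻¹ * ζ ^ (((∑ i, a' i * v i) + B' v).val)))
      = (((Real.sqrt (p ^ n) : ℂ))⁻¹ * ((Real.sqrt (p ^ n) : ℂ))⁻¹) * S := by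
    rw [hS, Finset.mul_sum]
    refine Finset.sum_congr rfl fun v _ => ?_
    rw [map_mul, map_inv₀, Complex.conj_ofReal]
    have h1 : (ζ ^ (((∑ i, a i * v i) + B v).val)) = e ((∑ i, a i * v i) + B v) := rfl
    have h2 : (starRingEnd ℂ) (ζ ^ (((∑ i, a' i * v i) + B' v).val))
        = e (-((∑ i, a' i * v i) + B' v)) := hconj _
    rw [h1, h2]
    have h3' : g v = ((∑ i, a i * v i) + B v) + (-((∑ i, a' i * v i) + B' v)) := by
      simp only [hg]; ring
    conv_rhs => rw [h3', hadd]
    ring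
  rw [hrw, norm_mul, norm_mul, norm_inv, Complex.norm_real, Real.norm_eq_abs, habsS,
    abs_of_pos hsqrt_pos, mul_assoc, inv_mul_cancel₀ hsqrt_pos.ne', mul_one, one_div]
end
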